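/- arXiv:math/0506541 — 3 statements merged into one kernel-verified Lean document; each statement's English description precedes it below -/
import Mathlib

section
/- In the monoid of the previous context (free commutative monoid on {A,B,C,D} modulo the eight listed relations), one has B = A⁴, C = A⁹, and D = A¹¹; consequently every nonempty word is a power of A. -/
/-- In any commutative monoid with `A, B, C, D` satisfying the eight listed
relations, one has `B = A⁴`, `C = A⁹`, `D = A¹¹`; consequently every nonempty
word in the generators is a power of `A`. -/
theorem stmt_10 (M : Type*) [CommMonoid M] (A B C D : M)
    (h₁ : A ^ 3 = C ^ 2) (h₂ : B ^ 3 = D ^ 2) (h₃ : C ^ 3 = A ^ 2) (h₄ : D ^ 3 = B ^ 2)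
    (h₅ : A * C ^ 2 = B) (h₆ : C * A ^ 2 = D) (h₇ : B * D ^ 2 = A) (h₈ : D * B ^ 2 = C) :
    B = A ^ 4 ∧ C = A ^ 9 ∧ D = A ^ 11 ∧
    ∀ x ∈ Submonoid.closure ({A, B, C, D} : Set M), x = 1 ∨
      ∃ n : ℕ, 1 ≤ n ∧ x = A ^ n := by
  have hB : B = A ^ 4 := by rw [← h₅, ← h₁]; exact (pow_succ' A 3).symm
  have hD2 : D ^ 2 = A ^ 7 := by
    rw [← h₆]
    calc (C * A ^ 2) ^ 2 = C ^ 2 * A ^ 4 := by simp [mul_pow, ← pow_mul, ← pow_add, ← pow_succ, mul_comm, mul_left_comm, mul_assoc]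
      _ = A ^ 3 * A ^ 4 := by rw [← h₁]
      _ = A ^ 7 := by simp [mul_pow, ← pow_mul, ← pow_add, ← pow_succ, mul_comm, mul_left_comm, mul_assoc]
  have hDA : D * A ^ 7 = A ^ 8 := by
    have h : D ^ 3 = A ^ 8 := by rw [h₄, hB]; simp [mul_pow, ← pow_mul, ← pow_add, ← pow_succ, mul_comm, mul_left_comm, mul_assoc]
    calc D * A ^ 7 = D * D ^ 2 := by rw [hD2]
      _ = D ^ 3 := (pow_succ' D 2).symm
      _ = A ^ 8 := h
  have hC : C = A ^ 9 := by
    rw [← h₈, hB]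
    calc D * (A ^ 4) ^ 2 = (D * A ^ 7) * A := by rw [mul_assoc, ← pow_succ, ← pow_mul]
      _ = A ^ 8 * A := by rw [hDA]
      _ = A ^ 9 := (pow_succ A 8).symm
  have hD : D = A ^ 11 := by rw [← h₆, hC]; simp [mul_pow, ← pow_mul, ← pow_add, ← pow_succ, mul_comm, mul_left_comm, mul_assoc]
  refine ⟨hB, hC, hD, ?_⟩
  intro x hx
  induction hx using Submonoid.closure_induction with
  | mem y hy =>
    right
    simp only [Set.mem_insert_iff, Set.mem_singleton_iff] at hy
    rcases hy with h | h | h | h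
    · exact ⟨1, le_refl 1, by rw [h, pow_one]⟩
    · exact ⟨4, by norm_num, by rw [h, hB]⟩
    · exact ⟨9, by norm_num, by rw [h, hC]⟩
    · exact ⟨11, by norm_num, by rw [h, hD]⟩
  | one => left; rfl
  | mul a b _ _ ha hb =>
    rcases ha with rfl | ⟨m, hm, rfl⟩
    · rcases hb with rfl | ⟨n, hn, rfl⟩
      · left; simp
      · right; exact ⟨n, hn, by simp⟩
    · rcases hb with rfl | ⟨n, hn, rfl⟩
      · right; exact ⟨m, hm, by simp⟩
      · right; exact ⟨m + n, by omega, (pow_add A m n).symm⟩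
end

section
/- In the monoid of the previous context, A = A⁶; hence the powers of A (with exponent ≥ 1) form a cyclic structure of order dividing 5, so every element is Aⁿ with n ∈ {1,2,3,4,5}. -/
/-- In any commutative monoid with `A, B, C, D` satisfying the eight listed
relations, `A = A⁶`; hence the positive powers of `A` are cyclic of order
dividing 5, so every nonempty word in the generators equals `Aⁿ` for some
`n ∈ {1,2,3,4,5}`. -/
theorem stmt_11 (M : Type*) [CommMonoid M] (A B C D : M)
    (h₁ : A ^ 3 = C ^ 2) (h₂ : B ^ 3 = D ^ 2) (h₃ : C ^ 3 = A ^ 2) (h₄ : D ^ 3 = B ^ 2)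
    (h₅ : A * C ^ 2 = B) (h₆ : C * A ^ 2 = D) (h₇ : B * D ^ 2 = A) (h₈ : D * B ^ 2 = C) :
    A = A ^ 6 ∧
    (∀ k k' : ℕ, 1 ≤ k → 1 ≤ k' → k ≡ k' [MOD 5] → A ^ k = A ^ k') ∧
    ∀ x ∈ Submonoid.closure ({A, B, C, D} : Set M), x = 1 ∨
      ∃ n : ℕ, 1 ≤ n ∧ n ≤ 5 ∧ x = A ^ n := by
  have hB : B = A ^ 4 := by
    rw [← h₅, ← h₁, ← pow_succ']
  have hCA : C * A ^ 3 = A ^ 2 := by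
    rw [h₁, ← pow_succ', h₃]
  have hD2 : D ^ 2 = A ^ 7 := by
    rw [← h₆, mul_pow, ← h₁, ← pow_mul, ← pow_add]
  have hA11 : A = A ^ 11 := by
    calc A = B * D ^ 2 := h₇.symm
    _ = A ^ 4 * A ^ 7 := by rw [hB, hD2]
    _ = A ^ 11 := by rw [← pow_add]
  have h712 : A ^ 7 = A ^ 12 := by
    rw [← hD2, ← h₂, hB, ← pow_mul]
  have hA6 : A = A ^ 6 := by
    calc A = A ^ 11 := hA11
    _ = A ^ 4 * A ^ 7 := by rw [← pow_add]
    _ = A ^ 4 * A ^ 12 := by rw [h712]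
    _ = A ^ 5 * A ^ 11 := by rw [← pow_add, ← pow_add]
    _ = A ^ 5 * A := by rw [← hA11]
    _ = A ^ 6 := by rw [← pow_succ]
  have hC : C = A ^ 4 := by
    have h10 : A ^ 10 = A ^ 5 := by
      calc A ^ 10 = A ^ 4 * A ^ 6 := by rw [← pow_add]
      _ = A ^ 4 * A := by rw [← hA6]
      _ = A ^ 5 := by rw [← pow_succ]
    calc C = D * B ^ 2 := h₈.symm
    _ = (C * A ^ 2) * (A ^ 4) ^ 2 := by rw [h₆, hB]
    _ = C * A ^ 10 := by rw [mul_assoc, ← pow_mul, ← pow_add]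
    _ = C * A ^ 5 := by rw [h10]
    _ = (C * A ^ 3) * A ^ 2 := by rw [mul_assoc, ← pow_add]
    _ = A ^ 4 := by rw [hCA, ← pow_add]
  have hD : D = A := by
    rw [← h₆, hC, ← pow_add, ← hA6]
  -- periodicity
  have step : ∀ k : ℕ, 1 ≤ k → A ^ (k + 5) = A ^ k := by
    intro k hk
    obtain ⟨j, rfl⟩ := Nat.exists_eq_add_of_le hk
    calc A ^ (1 + j + 5) = A ^ 6 * A ^ j := by rw [← pow_add]; ring_nf
    _ = A * A ^ j := by rw [← hA6]
    _ = A ^ (1 + j) := by rw [← pow_succ', add_comm]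
  have per : ∀ m k : ℕ, 1 ≤ k → A ^ (k + 5 * m) = A ^ k := by
    intro m
    induction m with
    | zero => simp
    | succ n ih =>
      intro k hk
      have : k + 5 * (n + 1) = (k + 5) + 5 * n := by ring
      rw [this, ih _ (by omega), step k hk]
  have hcong : ∀ k k' : ℕ, 1 ≤ k → 1 ≤ k' → k ≡ k' [MOD 5] → A ^ k = A ^ k' := by
    intro k k' hk hk' h
    rcases le_total k k' with hle | hle
    · obtain ⟨m, hm⟩ := (Nat.modEq_iff_dvd' hle).mp h
      have : k' = k + 5 * m := by omega
      rw [this, per m k hk]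
    · obtain ⟨m, hm⟩ := (Nat.modEq_iff_dvd' hle).mp h.symm
      have : k = k' + 5 * m := by omega
      rw [this, per m k' hk']
  refine ⟨hA6, hcong, ?_⟩
  intro x hx
  refine Submonoid.closure_induction ?_ ?_ ?_ hx
  · intro y hy
    right
    simp only [Set.mem_insert_iff, Set.mem_singleton_iff] at hy
    rcases hy with h | h | h | h
    · exact ⟨1, by norm_num, by norm_num, by rw [h, pow_one]⟩
    · exact ⟨4, by norm_num, by norm_num, by rw [h, hB]⟩
    · exact ⟨4, by norm_num, by norm_num, by rw [h, hC]⟩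
    · exact ⟨1, by norm_num, by norm_num, by rw [h, hD, pow_one]⟩
  · left; rfl
  · intro y z hy hz ihy ihz
    rcases ihy with hy1 | ⟨n, hn1, hn5, hyn⟩
    · rw [hy1, one_mul]; exact ihz
    · rcases ihz with hz1 | ⟨m, hm1, hm5, hzm⟩
      · right; exact ⟨n, hn1, hn5, by rw [hz1, mul_one, hyn]⟩
      · right
        refine ⟨(n + m - 1) % 5 + 1, by omega, by omega, ?_⟩
        rw [hyn, hzm, ← pow_add]
        exact hcong _ _ (by omega) (by omega) (by unfold Nat.ModEq; omega)
end

section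
/- The coloured untying invariant is additive under direct sum: if M₁, M₂ are symmetric integer matrices with p ∣ det Mᵢ, p² ∤ det Mᵢ, and v₁, v₂ satisfy Mᵢ·vᵢ ≡ 0 (mod p), then for M = M₁ ⊕ M₂ (block diagonal) and v = (v₁, v₂), one has (vᵀ·M·v)/p ≡ (v₁ᵀ·M₁·v₁)/p + (v₂ᵀ·M₂·v₂)/p (mod p). -/
open Matrix

/-- Additivity of the coloured untying invariant under direct sum: for symmetric
integer matrices `M₁, M₂` with `p ∣ det Mᵢ`, `p² ∤ det Mᵢ` and vectors `vᵢ` with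
`Mᵢ·vᵢ ≡ 0 (mod p)`, the block-diagonal matrix `M = M₁ ⊕ M₂` and
`v = (v₁, v₂)` satisfy `(vᵀMv)/p ≡ (v₁ᵀM₁v₁)/p + (v₂ᵀM₂v₂)/p (mod p)`. -/
theorem stmt_14 (p : ℕ) (hp : p.Prime) (hodd : Odd p) (n₁ n₂ : ℕ)
    (M₁ : Matrix (Fin n₁) (Fin n₁) ℤ) (M₂ : Matrix (Fin n₂) (Fin n₂) ℤ)
    (hM₁ : M₁.IsSymm) (hM₂ : M₂.IsSymm)
    (hdet₁ : (p : ℤ) ∣ M₁.det) (hdet₁' : ¬ ((p : ℤ) ^ 2 ∣ M₁.det))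
    (hdet₂ : (p : ℤ) ∣ M₂.det) (hdet₂' : ¬ ((p : ℤ) ^ 2 ∣ M₂.det))
    (v₁ : Fin n₁ → ℤ) (v₂ : Fin n₂ → ℤ)
    (hv₁ : ∀ i, (p : ℤ) ∣ M₁.mulVec v₁ i) (hv₂ : ∀ i, (p : ℤ) ∣ M₂.mulVec v₂ i) :
    (Sum.elim v₁ v₂ ⬝ᵥ (Matrix.fromBlocks M₁ 0 0 M₂).mulVec (Sum.elim v₁ v₂)) / (p : ℤ)
      ≡ (v₁ ⬝ᵥ M₁.mulVec v₁) / (p : ℤ) + (v₂ ⬝ᵥ M₂.mulVec v₂) / (p : ℤ)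
        [ZMOD (p : ℤ)] := by
  have d1 : (p : ℤ) ∣ v₁ ⬝ᵥ M₁.mulVec v₁ := Finset.dvd_sum fun i _ => Dvd.dvd.mul_left (hv₁ i) _
  have d2 : (p : ℤ) ∣ v₂ ⬝ᵥ M₂.mulVec v₂ := Finset.dvd_sum fun i _ => Dvd.dvd.mul_left (hv₂ i) _
  have key : (Sum.elim v₁ v₂ ⬝ᵥ (Matrix.fromBlocks M₁ 0 0 M₂).mulVec (Sum.elim v₁ v₂))
      = v₁ ⬝ᵥ M₁.mulVec v₁ + v₂ ⬝ᵥ M₂.mulVec v₂ := by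
    rw [fromBlocks_mulVec]
    simp [sumElim_dotProduct_sumElim]
  rw [key, Int.add_ediv_of_dvd_left d1]
end
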